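/- Let p and p̃ be probability density functions of univariate real random variables, let Q_K be the probability mass function of the rank statistic A_K, and define d_K(p, p̃) = (1/(K+1)) · Σ_{n=0}^{K} |1/(K+1) − Q_K(n)|. Then d_K(p, p̃) ≥ 0 for all K, and d_K(p, p̃) = 0 for every K ∈ ℕ if and only if p = p̃ almost everywhere. -/

import Mathlib

/-!
Let `μ` and `ν` be the measures with densities `p` and `p̃`, and view the cdf `F̃` of `ν` as a
map `G : ℝ → [0,1]`. Then `Q_K(n) = ∫ b_{K,n} d(G_* μ)` for the Bernstein basis polynomials
`b_{K,n}`, while `∫₀¹ b_{K,n} = 1/(K+1)` is a Beta integral. Hence `d_K = 0` for all `K` says that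
`G_* μ` and Lebesgue measure on `[0,1]` integrate every Bernstein polynomial alike, and since
Bernstein approximations converge uniformly, that `G_* μ` is uniform. For the continuous cdf `G`
this is equivalent to `μ = ν`: `G_* ν` is uniform (probability integral transform), and
conversely if `G_* μ` is uniform then `μ (-∞, y]` lies between `G_* μ [0, G y)` and
`G_* μ [0, G y]`, which both equal `G y = ν (-∞, y]`.
-/

open MeasureTheory

/-- The pmf of the rank statistic `A_K`:
`Q_K(n) = ∫ C(K,n) F̃(y)^n (1 - F̃(y))^{K-n} p(y) dy`, where `F̃` is the cdf of `p̃`. -/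
noncomputable def rankPMF (p Ftilde : ℝ → ℝ) (K n : ℕ) : ℝ :=
  ∫ y, (K.choose n : ℝ) * Ftilde y ^ n * (1 - Ftilde y) ^ (K - n) * p y

/-- The ISL discrepancy `d_K(p, p̃) = (1/(K+1)) Σ_{n=0}^K |1/(K+1) - Q_K(n)|`. -/
noncomputable def dISL (p Ftilde : ℝ → ℝ) (K : ℕ) : ℝ :=
  (1 / (K + 1 : ℝ)) *
    ∑ n ∈ Finset.range (K + 1), |1 / (K + 1 : ℝ) - rankPMF p Ftilde K n|

open Measure ProbabilityTheory Set Filter Topology unitInterval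
open scoped Nat

theorem integral_pow_mul_one_sub_pow (n m : ℕ) :
    ∫ x in (0 : ℝ)..1, x ^ n * (1 - x) ^ m = n ! * m ! / (n + m + 1)! := by
  have h := Complex.betaIntegral_eq_Gamma_mul_div (n + 1) (m + 1)
    (by simpa using Nat.cast_add_one_pos n) (by simpa using Nat.cast_add_one_pos m)
  simp only [Complex.betaIntegral, add_sub_cancel_right] at h
  have hsum : (n + 1 + (m + 1) : ℂ) = ((n + m + 1 : ℕ) : ℂ) + 1 := by push_cast; ring
  rw [hsum, Complex.Gamma_nat_eq_factorial, Complex.Gamma_nat_eq_factorial,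
    Complex.Gamma_nat_eq_factorial] at h
  have hreal (x : ℝ) :
      (x : ℂ) ^ (n : ℂ) * (1 - (x : ℂ)) ^ (m : ℂ) = ((x ^ n * (1 - x) ^ m : ℝ) : ℂ) := by
    push_cast
    simp only [Complex.cpow_natCast]
  simp only [hreal, intervalIntegral.integral_ofReal] at h
  exact Complex.ofReal_injective (by rw [h]; push_cast; ring)

theorem integral_bernstein {K n : ℕ} (h : n ≤ K) : ∫ x, bernstein K n x = 1 / (K + 1) := by
  have hIcc : ∫ x, bernstein K n x =
      ∫ x in (0 : ℝ)..1, (K.choose n : ℝ) * (x ^ n * (1 - x) ^ (K - n)) := by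
    rw [intervalIntegral.integral_of_le zero_le_one, ← integral_Icc_eq_integral_Ioc,
      ← measurePreserving_coe.integral_comp measurableEmbedding_coe]
    simp only [bernstein_apply, mul_assoc]
  rw [hIcc, intervalIntegral.integral_const_mul, integral_pow_mul_one_sub_pow,
    Nat.add_sub_cancel' h, Nat.choose_eq_factorial_div_factorial h,
    Nat.cast_div (Nat.factorial_mul_factorial_dvd_factorial h) (by positivity),
    Nat.factorial_succ]
  push_cast
  field_simp

lemma ContinuousMap.continuous_integral {X : Type*} [TopologicalSpace X] [CompactSpace X]
    [MeasurableSpace X] [BorelSpace X] (μ : Measure X) [IsFiniteMeasure μ] :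
    Continuous fun f : C(X, ℝ) => ∫ x, f x ∂μ := by
  have hLp : (fun f : C(X, ℝ) => ∫ x, f x ∂μ) = fun f => ∫ x, toLp 1 μ ℝ f x ∂μ :=
    funext fun f => integral_congr_ae (coeFn_toLp μ f).symm
  rw [hLp]
  exact MeasureTheory.continuous_integral.comp (toLp 1 μ ℝ).continuous

theorem unitInterval.ext_of_integral_bernstein {μ ν : Measure I} [IsFiniteMeasure μ]
    [IsFiniteMeasure ν]
    (h : ∀ K n, n ≤ K → ∫ x, bernstein K n x ∂μ = ∫ x, bernstein K n x ∂ν) : μ = ν := by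
  refine ext_of_forall_integral_eq_of_IsFiniteMeasure fun f => ?_
  let g := f.toContinuousMap
  have happrox (ρ : Measure I) [IsFiniteMeasure ρ] (K : ℕ) :
      ∫ x, bernsteinApproximation K g x ∂ρ =
        ∑ k : Fin (K + 1), (∫ x, bernstein K k x ∂ρ) * g (bernstein.z k) := by
    simp only [bernsteinApproximation.apply, smul_eq_mul]
    rw [integral_finsetSum _ fun k _ => ?_]
    · simp only [integral_mul_const]
    · exact ((bernstein K k).continuous.integrable_of_hasCompactSupport
        (HasCompactSupport.of_compactSpace _)).mul_const _
  have hlim (ρ : Measure I) [IsFiniteMeasure ρ] :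
      Tendsto (fun K => ∑ k : Fin (K + 1), (∫ x, bernstein K k x ∂ρ) * g (bernstein.z k))
        atTop (𝓝 (∫ x, g x ∂ρ)) := by
    simpa only [Function.comp_def, happrox] using
      ((ContinuousMap.continuous_integral ρ).tendsto g).comp (bernsteinApproximation_uniform g)
  show ∫ x, g x ∂μ = ∫ x, g x ∂ν
  refine tendsto_nhds_unique (hlim μ) ?_
  simpa only [fun K (k : Fin (K + 1)) => h K k k.is_le] using hlim ν

namespace ProbabilityTheory

noncomputable def cdfUnitInterval (ν : Measure ℝ) : ℝ → I :=
  codRestrict (cdf ν) I fun y => ⟨cdf_nonneg ν y, cdf_le_one ν y⟩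

lemma monotone_cdfUnitInterval (ν : Measure ℝ) : Monotone (cdfUnitInterval ν) :=
  fun _ _ h => monotone_cdf ν h

lemma Ioo_subset_range_cdf {ν : Measure ℝ} (hν : Continuous (cdf ν)) :
    Ioo 0 1 ⊆ range (cdf ν) := by
  intro t ht
  obtain ⟨a, ha⟩ := ((tendsto_cdf_atBot ν).eventually (gt_mem_nhds ht.1)).exists
  obtain ⟨b, hb⟩ := ((tendsto_cdf_atTop ν).eventually (lt_mem_nhds ht.2)).exists
  exact intermediate_value_univ a b hν ⟨ha.le, hb.le⟩

variable {ν : Measure ℝ} [IsProbabilityMeasure ν]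

lemma measure_cdf_le (hν : Continuous (cdf ν)) {t : ℝ} (ht : t ∈ Icc 0 1) :
    ν {y | cdf ν y ≤ t} = ENNReal.ofReal t := by
  rcases ht.2.eq_or_lt with rfl | ht1
  · simp [cdf_le_one]
  apply le_antisymm
  · have hbound : ∀ s ∈ Ioo t 1, ν {y | cdf ν y ≤ t} ≤ ENNReal.ofReal s := by
      rintro s ⟨hts, hs1⟩
      obtain ⟨y, rfl⟩ := Ioo_subset_range_cdf hν ⟨ht.1.trans_lt hts, hs1⟩
      rw [ofReal_cdf]
      exact measure_mono fun x hx => ((monotone_cdf ν).reflect_lt (hx.out.trans_lt hts)).le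
    exact ge_of_tendsto ((ENNReal.continuous_ofReal.tendsto t).mono_left nhdsWithin_le_nhds)
      (eventually_of_mem (Ioo_mem_nhdsGT ht1) hbound)
  · rcases ht.1.eq_or_lt with rfl | ht0
    · simp
    obtain ⟨y, rfl⟩ := Ioo_subset_range_cdf hν ⟨ht0, ht1⟩
    rw [ofReal_cdf]
    exact measure_mono fun x hx => monotone_cdf ν hx

theorem map_cdfUnitInterval (hν : Continuous (cdf ν)) : ν.map (cdfUnitInterval ν) = volume := by
  refine ext_of_Iic _ _ fun t => ?_
  rw [map_apply (monotone_cdfUnitInterval ν).measurable measurableSet_Iic, volume_Iic]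
  exact measure_cdf_le hν t.2

lemma measure_Iic_of_map_eq_volume {μ : Measure ℝ} {G : ℝ → I} (hG : Monotone G)
    (h : μ.map G = volume) (y : ℝ) : μ (Iic y) = ENNReal.ofReal (G y) := by
  apply le_antisymm
  · calc μ (Iic y) ≤ μ (G ⁻¹' Iic (G y)) := measure_mono fun x hx => hG hx
      _ = ENNReal.ofReal (G y) := by
        rw [← map_apply hG.measurable measurableSet_Iic, h, volume_Iic]
  · calc ENNReal.ofReal (G y) = μ (G ⁻¹' Iio (G y)) := by
          rw [← map_apply hG.measurable measurableSet_Iio, h, volume_Iio]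
      _ ≤ μ (Iic y) := measure_mono fun x hx => (hG.reflect_lt hx).le

theorem map_cdfUnitInterval_eq_volume_iff {μ : Measure ℝ} [IsFiniteMeasure μ]
    (hν : Continuous (cdf ν)) : μ.map (cdfUnitInterval ν) = volume ↔ μ = ν := by
  refine ⟨fun h => ext_of_Iic _ _ fun y => ?_, fun h => by rw [h]; exact map_cdfUnitInterval hν⟩
  rw [measure_Iic_of_map_eq_volume (monotone_cdfUnitInterval ν) h, ← ofReal_cdf]
  rfl

end ProbabilityTheory

section withDensity

variable {X : Type*} [MeasurableSpace X] {μ : Measure X} {p : X → ℝ}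

lemma withDensity_ofReal_apply (hp : 0 ≤ᵐ[μ] p) (hpi : Integrable p μ) {s : Set X}
    (hs : MeasurableSet s) :
    μ.withDensity (fun x => ENNReal.ofReal (p x)) s = ENNReal.ofReal (∫ x in s, p x ∂μ) := by
  rw [withDensity_apply _ hs,
    ofReal_integral_eq_lintegral_ofReal hpi.integrableOn (ae_restrict_of_ae hp)]

lemma isProbabilityMeasure_withDensity_ofReal (hp : 0 ≤ᵐ[μ] p) (hpi : Integrable p μ)
    (h1 : ∫ x, p x ∂μ = 1) :
    IsProbabilityMeasure (μ.withDensity fun x => ENNReal.ofReal (p x)) :=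
  ⟨by rw [withDensity_ofReal_apply hp hpi MeasurableSet.univ, setIntegral_univ, h1,
    ENNReal.ofReal_one]⟩

lemma withDensity_ofReal_eq_iff [SigmaFinite μ] {q : X → ℝ} (hp : 0 ≤ᵐ[μ] p) (hq : 0 ≤ᵐ[μ] q)
    (hpm : AEMeasurable p μ) (hqm : AEMeasurable q μ) :
    μ.withDensity (fun x => ENNReal.ofReal (p x)) =
        μ.withDensity (fun x => ENNReal.ofReal (q x)) ↔ p =ᵐ[μ] q := by
  rw [withDensity_eq_iff_of_sigmaFinite hpm.ennreal_ofReal hqm.ennreal_ofReal]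
  refine ⟨fun h => ?_, fun h => h.fun_comp ENNReal.ofReal⟩
  filter_upwards [h, hp, hq] with x hx hpx hqx
  exact (ENNReal.ofReal_eq_ofReal_iff hpx hqx).mp hx

end withDensity

lemma MeasureTheory.Integrable.continuous_setIntegral_Iic {f : ℝ → ℝ} (hf : Integrable f) :
    Continuous fun y => ∫ x in Iic y, f x := by
  have hsplit : (fun y => ∫ x in Iic y, f x) = fun y => (∫ x in Iic 0, f x) + ∫ x in 0..y, f x := by
    funext y
    rw [← intervalIntegral.integral_Iic_sub_Iic hf.integrableOn hf.integrableOn]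
    ring
  rw [hsplit]
  exact continuous_const.add (hf.continuous_primitive 0)

lemma cdf_withDensity_ofReal {p : ℝ → ℝ} (hp : ∀ x, 0 ≤ p x) (hpi : Integrable p)
    [IsProbabilityMeasure (volume.withDensity fun x => ENNReal.ofReal (p x))] (y : ℝ) :
    cdf (volume.withDensity fun x => ENNReal.ofReal (p x)) y = ∫ x in Iic y, p x := by
  rw [ProbabilityTheory.cdf_eq_real, measureReal_def,
    withDensity_ofReal_apply (ae_of_all _ hp) hpi measurableSet_Iic,
    ENNReal.toReal_ofReal (setIntegral_nonneg measurableSet_Iic fun x _ => hp x)]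

lemma rankPMF_eq_integral_bernstein {p : ℝ → ℝ} (hp : ∀ x, 0 ≤ p x) (hpm : AEMeasurable p)
    {G : ℝ → I} (hG : Measurable G) (K n : ℕ) :
    rankPMF p (fun y => G y) K n =
      ∫ x, bernstein K n x ∂(volume.withDensity fun y => ENNReal.ofReal (p y)).map G := by
  rw [integral_map hG.aemeasurable (bernstein K n).continuous.aestronglyMeasurable,
    integral_withDensity_eq_integral_toReal_smul₀ hpm.ennreal_ofReal
      (ae_of_all _ fun _ => ENNReal.ofReal_lt_top)]
  refine integral_congr_ae (ae_of_all _ fun y => ?_)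
  simp only [bernstein_apply, ENNReal.toReal_ofReal (hp y), smul_eq_mul]
  ring

lemma dISL_nonneg (p F : ℝ → ℝ) (K : ℕ) : 0 ≤ dISL p F K :=
  mul_nonneg (by positivity) (Finset.sum_nonneg fun _ _ => abs_nonneg _)

lemma dISL_eq_zero_iff {p F : ℝ → ℝ} {K : ℕ} :
    dISL p F K = 0 ↔ ∀ n ≤ K, rankPMF p F K n = 1 / (K + 1) := by
  have hK : (1 / (K + 1 : ℝ)) ≠ 0 := by positivity
  rw [dISL, mul_eq_zero, or_iff_right hK,
    Finset.sum_eq_zero_iff_of_nonneg fun _ _ => abs_nonneg _]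
  simp only [Finset.mem_range, Nat.lt_succ_iff, abs_eq_zero, sub_eq_zero]
  exact forall₂_congr fun _ _ => eq_comm

theorem dISL_nonneg_and_eq_zero_iff_ae_eq_general
    (p ptilde : ℝ → ℝ) (Ftilde : ℝ → ℝ)
    (hp_nonneg : ∀ x, 0 ≤ p x) (hp_int : Integrable p)
    (hpt_nonneg : ∀ x, 0 ≤ ptilde x) (hpt_int : Integrable ptilde)
    (hpt_one : ∫ x, ptilde x = 1)
    (hF : ∀ y, Ftilde y = ∫ x in Set.Iic y, ptilde x) :
    (∀ K : ℕ, 0 ≤ dISL p Ftilde K)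
      ∧ ((∀ K : ℕ, dISL p Ftilde K = 0) ↔ p =ᵐ[volume] ptilde) := by
  set μ := volume.withDensity fun x => ENNReal.ofReal (p x)
  set ν := volume.withDensity fun x => ENNReal.ofReal (ptilde x)
  have : IsFiniteMeasure μ := isFiniteMeasure_withDensity_ofReal hp_int.2
  have : IsProbabilityMeasure ν :=
    isProbabilityMeasure_withDensity_ofReal (ae_of_all _ hpt_nonneg) hpt_int hpt_one
  have hcdf : ⇑(cdf ν) = Ftilde :=
    funext fun y => (cdf_withDensity_ofReal hpt_nonneg hpt_int y).trans (hF y).symm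
  have hcont : Continuous (cdf ν) := by
    rw [hcdf, funext hF]
    exact hpt_int.continuous_setIntegral_Iic
  subst hcdf
  let G := cdfUnitInterval ν
  refine ⟨dISL_nonneg p _, ?_⟩
  calc (∀ K, dISL p (cdf ν) K = 0)
      ↔ ∀ K n, n ≤ K → ∫ x, bernstein K n x ∂μ.map G = ∫ x, bernstein K n x := by
        simp only [dISL_eq_zero_iff]
        refine forall_congr' fun K => forall₂_congr fun n hn => ?_
        rw [integral_bernstein hn, ← rankPMF_eq_integral_bernstein hp_nonneg hp_int.aemeasurable
          (monotone_cdfUnitInterval ν).measurable]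
        rfl
    _ ↔ μ.map G = volume := ⟨ext_of_integral_bernstein, fun h _ _ _ => by rw [h]⟩
    _ ↔ μ = ν := map_cdfUnitInterval_eq_volume_iff hcont
    _ ↔ p =ᵐ[volume] ptilde :=
        withDensity_ofReal_eq_iff (ae_of_all _ hp_nonneg) (ae_of_all _ hpt_nonneg)
          hp_int.aemeasurable hpt_int.aemeasurable

/-- **`d_K` is a divergence.** For probability densities `p, p̃` on `ℝ` (with `F̃` the
cdf of `p̃`), we have `d_K(p, p̃) ≥ 0` for all `K`, and `d_K(p, p̃) = 0` for every
`K ∈ ℕ` if and only if `p = p̃` almost everywhere. -/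
theorem dISL_nonneg_and_eq_zero_iff_ae_eq
    (p ptilde : ℝ → ℝ) (Ftilde : ℝ → ℝ)
    (hp_nonneg : ∀ x, 0 ≤ p x) (hp_int : Integrable p)
    (hp_one : ∫ x, p x = 1)
    (hpt_nonneg : ∀ x, 0 ≤ ptilde x) (hpt_int : Integrable ptilde)
    (hpt_one : ∫ x, ptilde x = 1)
    (hF : ∀ y, Ftilde y = ∫ x in Set.Iic y, ptilde x) :
    (∀ K : ℕ, 0 ≤ dISL p Ftilde K)
      ∧ ((∀ K : ℕ, dISL p Ftilde K = 0) ↔ p =ᵐ[volume] ptilde) :=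
  dISL_nonneg_and_eq_zero_iff_ae_eq_general p ptilde Ftilde hp_nonneg hp_int hpt_nonneg hpt_int
    hpt_one hF
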